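/- (Robustness of the triply robust functional under submodel M1: correct selection probability and propensity score) Under Assumptions (A1)–(A4), for any bounded measurable functions μ* : {0,1} × 𝒳 × 𝒱 → ℝ and h* : 𝒳 → ℝ, setting m*(x,v) = μ*(1,x,v) − μ*(0,x,v), one has E[ (R/ρ(X))·{ (Z/π(X,V))·(Y − μ*(1,X,V)) − ((1−Z)/(1−π(X,V)))·(Y − μ*(0,X,V)) + m*(X,V) − h*(X) } + h*(X) ] = τ. -/

import Mathlib

/-!
If a `{0,1}`-valued `Z` is conditionally independent of `W` given `m'`, and `φ` is
`m'`-measurable, then weighting `μ` by `Z` or by `μ[Z | m']` gives the same law of `(φ, W)`: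
on rectangles this is the factorisation `μ⟦Z = 1, W ∈ t | m'⟧ = μ[Z | m'] * μ⟦W ∈ t | m'⟧`, and
rectangles form a π-system. Hence, when `p ∘ φ` is a version of `μ[Z | m']` that does not vanish,
`E[Z / p(φ) * g(φ, W)] = E[g(φ, W)]`, integrability included.

Used with `(R, ρ, X)` (assumption A1) this removes the selection weight, after which the `h*` terms
cancel. Used with `(Z, π, (X, V))` and `(1 - Z, 1 - π, (X, V))` (assumption A2) it turns the
augmented inverse-probability-weighted score into `Y1 - μ*(1, ·) - (Y0 - μ*(0, ·)) + m*`, whose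
mean is `τ`.
-/

open MeasureTheory ProbabilityTheory

lemma eq_indicator_preimage_one {Ω : Type*} {Z : Ω → ℝ} (hZ01 : ∀ ω, Z ω = 0 ∨ Z ω = 1) :
    Z = (Z ⁻¹' {1}).indicator fun _ => 1 := by
  ext ω
  rcases hZ01 ω with h | h <;> simp [h]

lemma nonneg_of_zero_or_one {Ω : Type*} {Z : Ω → ℝ} (hZ01 : ∀ ω, Z ω = 0 ∨ Z ω = 1) :
    0 ≤ Z := fun ω => by
  rcases hZ01 ω with h | h <;> simp [h]

lemma integrable_of_zero_or_one {Ω : Type*} [MeasurableSpace Ω] {μ : Measure Ω}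
    [IsFiniteMeasure μ] {Z : Ω → ℝ} (hZ : Measurable Z)
    (hZ01 : ∀ ω, Z ω = 0 ∨ Z ω = 1) : Integrable Z μ := by
  rw [eq_indicator_preimage_one hZ01]
  exact (integrable_const 1).indicator (hZ (measurableSet_singleton 1))

section
variable {Ω α : Type*} [MeasurableSpace Ω] [MeasurableSpace α] {μ : Measure Ω}
  {d : Ω → ℝ} {g : Ω → α} {f : α → ℝ}

lemma integral_map_withDensity_ofReal (hd : Measurable d) (hd0 : 0 ≤ᵐ[μ] d)
    (hg : Measurable g) (hf : Measurable f) :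
    ∫ x, f x ∂(μ.withDensity fun ω => ENNReal.ofReal (d ω)).map g = ∫ ω, d ω * f (g ω) ∂μ := by
  rw [integral_map hg.aemeasurable hf.aestronglyMeasurable,
    integral_withDensity_eq_integral_toReal_smul hd.ennreal_ofReal
      (.of_forall fun _ => ENNReal.ofReal_lt_top)]
  refine integral_congr_ae (hd0.mono fun ω h => ?_)
  simp [ENNReal.toReal_ofReal h]

lemma integrable_map_withDensity_ofReal_iff (hd : Measurable d) (hd0 : 0 ≤ᵐ[μ] d)
    (hg : Measurable g) (hf : Measurable f) :
    Integrable f ((μ.withDensity fun ω => ENNReal.ofReal (d ω)).map g)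
      ↔ Integrable (fun ω => d ω * f (g ω)) μ := by
  rw [integrable_map_measure hf.aestronglyMeasurable hg.aemeasurable,
    integrable_withDensity_iff_integrable_smul' hd.ennreal_ofReal
      (.of_forall fun _ => ENNReal.ofReal_lt_top)]
  refine integrable_congr (hd0.mono fun ω h => ?_)
  simp [ENNReal.toReal_ofReal h]

end

lemma one_sub_ae_eq_condExp_one_sub {Ω : Type*} {m' mΩ : MeasurableSpace Ω} {μ : Measure Ω}
    [IsFiniteMeasure μ] {Z q : Ω → ℝ} (hm' : m' ≤ mΩ) (hZ : Integrable Z μ) (hq : q =ᵐ[μ] μ[Z | m']) :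
    (fun ω => 1 - q ω) =ᵐ[μ] μ[fun ω => 1 - Z ω | m'] := by
  have hsub := condExp_sub (integrable_const (1 : ℝ)) hZ m'
  rw [condExp_const hm'] at hsub
  filter_upwards [hsub, hq] with ω h1 h2
  rw [h2]
  exact h1.symm

lemma condExp_mul_div_ae_eq {Ω S T : Type*} {m' : MeasurableSpace Ω} [MeasurableSpace Ω]
    {μ : Measure Ω} {φ : Ω → S} {W : Ω → T} {Z : Ω → ℝ} {p : S → ℝ}
    (hp : (fun ω => p (φ ω)) =ᵐ[μ] μ[Z | m']) (hp0 : ∀ᵐ ω ∂μ, p (φ ω) ≠ 0) (g : S × T → ℝ) :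
    (fun ω => (μ[Z | m']) ω * (g (φ ω, W ω) / p (φ ω))) =ᵐ[μ] fun ω => g (φ ω, W ω) := by
  filter_upwards [hp, hp0] with ω hpω hp0ω
  rw [← hpω, mul_div_cancel₀ _ hp0ω]

section
variable {Ω S T : Type*} {m' mΩ : MeasurableSpace Ω} [StandardBorelSpace Ω]
  [MeasurableSpace S] [MeasurableSpace T] {μ : Measure Ω} [IsFiniteMeasure μ]
  {φ : Ω → S} {W : Ω → T} {Z : Ω → ℝ}

lemma setIntegral_inter_preimage_eq_condExp_of_condIndepFun (hm' : m' ≤ mΩ)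
    (hZ : Measurable Z) (hW : Measurable W) (hZ01 : ∀ ω, Z ω = 0 ∨ Z ω = 1)
    (hZW : CondIndepFun m' hm' Z W μ) {A : Set Ω} {t : Set T}
    (hA : MeasurableSet[m'] A) (ht : MeasurableSet t) :
    ∫ ω in A ∩ W ⁻¹' t, Z ω ∂μ = ∫ ω in A ∩ W ⁻¹' t, (μ[Z | m']) ω ∂μ := by
  set E := Z ⁻¹' {1}
  set B := W ⁻¹' t
  have hB : MeasurableSet B := hW ht
  have hZE : Z = E.indicator fun _ => 1 := eq_indicator_preimage_one hZ01
  have hBi : Integrable (B.indicator fun _ => (1 : ℝ)) μ := (integrable_const 1).indicator hB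
  have hEBi : Integrable ((E ∩ B).indicator fun _ => (1 : ℝ)) μ :=
    (integrable_const 1).indicator ((hZ (measurableSet_singleton 1)).inter hB)
  have hsplit : μ⟦E ∩ B | m'⟧ =ᵐ[μ] μ[Z | m'] * μ⟦B | m'⟧ := by
    have := (condIndepFun_iff_condExp_inter_preimage_eq_mul hZ hW).mp hZW {1} t
      (measurableSet_singleton 1) ht
    rwa [← hZE] at this
  have hmul : μ[Z | m'] * B.indicator (fun _ => 1) = B.indicator (μ[Z | m']) := by
    ext ω
    by_cases hω : ω ∈ B <;> simp [hω]
  have hmuli : Integrable (μ[Z | m'] * B.indicator fun _ => 1) μ :=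
    hmul ▸ integrable_condExp.indicator hB
  have hpull : μ[μ[Z | m'] * B.indicator (fun _ => 1) | m'] =ᵐ[μ] μ[Z | m'] * μ⟦B | m'⟧ :=
    condExp_mul_of_stronglyMeasurable_left stronglyMeasurable_condExp hmuli hBi
  calc ∫ ω in A ∩ B, Z ω ∂μ
      = ∫ ω in A, (E ∩ B).indicator (fun _ => (1 : ℝ)) ω ∂μ := by
        rw [← setIntegral_indicator hB, hZE, Set.indicator_indicator, Set.inter_comm]
    _ = ∫ ω in A, (μ[μ[Z | m'] * B.indicator (fun _ => 1) | m']) ω ∂μ := by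
        rw [← setIntegral_condExp hm' hEBi hA]
        exact setIntegral_congr_ae (hm' _ hA) ((hsplit.trans hpull.symm).mono fun _ h _ => h)
    _ = ∫ ω in A ∩ B, (μ[Z | m']) ω ∂μ := by
        rw [setIntegral_condExp hm' hmuli hA, hmul, setIntegral_indicator hB]

lemma map_withDensity_eq_of_condIndepFun (hm' : m' ≤ mΩ) (hφ : Measurable[m'] φ)
    (hZ : Measurable Z) (hW : Measurable W) (hZ01 : ∀ ω, Z ω = 0 ∨ Z ω = 1)
    (hZW : CondIndepFun m' hm' Z W μ) :
    (μ.withDensity fun ω => ENNReal.ofReal (Z ω)).map (fun ω => (φ ω, W ω))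
      = (μ.withDensity fun ω => ENNReal.ofReal ((μ[Z | m']) ω)).map (fun ω => (φ ω, W ω)) := by
  have hpair : Measurable fun ω => (φ ω, W ω) := (hφ.mono hm' le_rfl).prodMk hW
  have hZ0 : 0 ≤ Z := nonneg_of_zero_or_one hZ01
  have hZi : Integrable Z μ := integrable_of_zero_or_one hZ hZ01
  have := isFiniteMeasure_withDensity_ofReal hZi.2
  have := isFiniteMeasure_withDensity_ofReal (integrable_condExp (m := m') (μ := μ) (f := Z)).2
  have hrect : ∀ s t, MeasurableSet s → MeasurableSet t →
      (μ.withDensity fun ω => ENNReal.ofReal (Z ω)).map (fun ω => (φ ω, W ω)) (s ×ˢ t)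
        = (μ.withDensity fun ω => ENNReal.ofReal ((μ[Z | m']) ω)).map
            (fun ω => (φ ω, W ω)) (s ×ˢ t) := by
    intro s t hs ht
    have hE : MeasurableSet (φ ⁻¹' s ∩ W ⁻¹' t) := (hm' _ (hφ hs)).inter (hW ht)
    rw [Measure.map_apply hpair (hs.prod ht), Measure.map_apply hpair (hs.prod ht),
      Set.mk_preimage_prod, withDensity_apply _ hE, withDensity_apply _ hE,
      ← ofReal_integral_eq_lintegral_ofReal hZi.integrableOn (.of_forall hZ0),
      ← ofReal_integral_eq_lintegral_ofReal integrable_condExp.integrableOn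
        (ae_restrict_of_ae (condExp_nonneg (.of_forall hZ0))),
      setIntegral_inter_preimage_eq_condExp_of_condIndepFun hm' hZ hW hZ01 hZW (hφ hs) ht]
  refine ext_of_generate_finite _ generateFrom_prod.symm isPiSystem_prod ?_ ?_
  · rintro _ ⟨s, hs, t, ht, rfl⟩
    exact hrect s t hs ht
  · simpa using hrect _ _ MeasurableSet.univ MeasurableSet.univ

lemma integrable_mul_iff_condExp_mul_of_condIndepFun (hm' : m' ≤ mΩ) (hφ : Measurable[m'] φ)
    (hZ : Measurable Z) (hW : Measurable W) (hZ01 : ∀ ω, Z ω = 0 ∨ Z ω = 1)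
    (hZW : CondIndepFun m' hm' Z W μ) {f : S × T → ℝ} (hf : Measurable f) :
    Integrable (fun ω => Z ω * f (φ ω, W ω)) μ
      ↔ Integrable (fun ω => (μ[Z | m']) ω * f (φ ω, W ω)) μ := by
  have hpair : Measurable fun ω => (φ ω, W ω) := (hφ.mono hm' le_rfl).prodMk hW
  have hZ0 : 0 ≤ᵐ[μ] Z := .of_forall (nonneg_of_zero_or_one hZ01)
  rw [← integrable_map_withDensity_ofReal_iff hZ hZ0 hpair hf,
    map_withDensity_eq_of_condIndepFun hm' hφ hZ hW hZ01 hZW,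
    integrable_map_withDensity_ofReal_iff (stronglyMeasurable_condExp.measurable.mono hm' le_rfl)
      (condExp_nonneg hZ0) hpair hf]

lemma integral_mul_eq_condExp_mul_of_condIndepFun (hm' : m' ≤ mΩ) (hφ : Measurable[m'] φ)
    (hZ : Measurable Z) (hW : Measurable W) (hZ01 : ∀ ω, Z ω = 0 ∨ Z ω = 1)
    (hZW : CondIndepFun m' hm' Z W μ) {f : S × T → ℝ} (hf : Measurable f) :
    ∫ ω, Z ω * f (φ ω, W ω) ∂μ = ∫ ω, (μ[Z | m']) ω * f (φ ω, W ω) ∂μ := by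
  have hpair : Measurable fun ω => (φ ω, W ω) := (hφ.mono hm' le_rfl).prodMk hW
  have hZ0 : 0 ≤ᵐ[μ] Z := .of_forall (nonneg_of_zero_or_one hZ01)
  rw [← integral_map_withDensity_ofReal hZ hZ0 hpair hf,
    map_withDensity_eq_of_condIndepFun hm' hφ hZ hW hZ01 hZW,
    integral_map_withDensity_ofReal (stronglyMeasurable_condExp.measurable.mono hm' le_rfl)
      (condExp_nonneg hZ0) hpair hf]

variable {p : S → ℝ} {g : S × T → ℝ}

lemma integrable_div_mul_of_condIndepFun (hm' : m' ≤ mΩ) (hφ : Measurable[m'] φ)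
    (hZ : Measurable Z) (hW : Measurable W) (hZ01 : ∀ ω, Z ω = 0 ∨ Z ω = 1)
    (hZW : CondIndepFun m' hm' Z W μ) (hpM : Measurable p)
    (hp : (fun ω => p (φ ω)) =ᵐ[μ] μ[Z | m']) (hp0 : ∀ᵐ ω ∂μ, p (φ ω) ≠ 0)
    (hg : Measurable g) (hgi : Integrable (fun ω => g (φ ω, W ω)) μ) :
    Integrable (fun ω => Z ω / p (φ ω) * g (φ ω, W ω)) μ := by
  have := (integrable_mul_iff_condExp_mul_of_condIndepFun hm' hφ hZ hW hZ01 hZW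
    (f := fun x => g x / p x.1) (hg.div (hpM.comp measurable_fst))).2
    (hgi.congr (condExp_mul_div_ae_eq hp hp0 g).symm)
  exact this.congr (.of_forall fun ω => by ring)

lemma integral_div_mul_eq_of_condIndepFun (hm' : m' ≤ mΩ) (hφ : Measurable[m'] φ)
    (hZ : Measurable Z) (hW : Measurable W) (hZ01 : ∀ ω, Z ω = 0 ∨ Z ω = 1)
    (hZW : CondIndepFun m' hm' Z W μ) (hpM : Measurable p)
    (hp : (fun ω => p (φ ω)) =ᵐ[μ] μ[Z | m']) (hp0 : ∀ᵐ ω ∂μ, p (φ ω) ≠ 0)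
    (hg : Measurable g) :
    ∫ ω, Z ω / p (φ ω) * g (φ ω, W ω) ∂μ = ∫ ω, g (φ ω, W ω) ∂μ := by
  calc ∫ ω, Z ω / p (φ ω) * g (φ ω, W ω) ∂μ = ∫ ω, Z ω * (g (φ ω, W ω) / p (φ ω)) ∂μ := by
        congr 1; ext ω; ring
    _ = ∫ ω, g (φ ω, W ω) ∂μ := by
        rw [integral_mul_eq_condExp_mul_of_condIndepFun hm' hφ hZ hW hZ01 hZW
          (f := fun x => g x / p x.1) (hg.div (hpM.comp measurable_fst))]
        exact integral_congr_ae (condExp_mul_div_ae_eq hp hp0 g)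

lemma integral_div_mul_sub_add_eq_of_condIndepFun (hm' : m' ≤ mΩ) (hφ : Measurable[m'] φ)
    (hZ : Measurable Z) (hW : Measurable W) (hZ01 : ∀ ω, Z ω = 0 ∨ Z ω = 1)
    (hZW : CondIndepFun m' hm' Z W μ) (hpM : Measurable p)
    (hp : (fun ω => p (φ ω)) =ᵐ[μ] μ[Z | m']) (hp0 : ∀ᵐ ω ∂μ, p (φ ω) ≠ 0)
    (hg : Measurable g) (hgi : Integrable (fun ω => g (φ ω, W ω)) μ)
    {h : S → ℝ} (hh : Measurable h) (hhi : Integrable (fun ω => h (φ ω)) μ) :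
    ∫ ω, Z ω / p (φ ω) * (g (φ ω, W ω) - h (φ ω)) + h (φ ω) ∂μ = ∫ ω, g (φ ω, W ω) ∂μ := by
  have hgh : Measurable fun x : S × T => g x - h x.1 := hg.sub (hh.comp measurable_fst)
  rw [integral_add (integrable_div_mul_of_condIndepFun hm' hφ hZ hW hZ01 hZW hpM hp hp0 hgh
      (hgi.sub hhi)) hhi,
    integral_div_mul_eq_of_condIndepFun hm' hφ hZ hW hZ01 hZW hpM hp hp0 hgh,
    integral_sub hgi hhi, sub_add_cancel]

end

/-- The augmented inverse-probability-weighted score. -/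
noncomputable def aipwScore {Ω S : Type*} (pi : S → ℝ) (mu : ℝ × S → ℝ) (L : Ω → S)
    (Z Y : Ω → ℝ) (ω : Ω) : ℝ :=
  Z ω / pi (L ω) * (Y ω - mu (1, L ω)) - (1 - Z ω) / (1 - pi (L ω)) * (Y ω - mu (0, L ω))
    + (mu (1, L ω) - mu (0, L ω))

section
variable {Ω S : Type*} {pi : S → ℝ} {mu : ℝ × S → ℝ} {L : Ω → S} {Z Y Y0 Y1 : Ω → ℝ}

lemma measurable_aipwScore [MeasurableSpace Ω] [MeasurableSpace S] (hpi : Measurable pi)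
    (hmu : Measurable mu) (hL : Measurable L) (hZ : Measurable Z) (hY : Measurable Y) :
    Measurable (aipwScore pi mu L Z Y) := by
  unfold aipwScore
  fun_prop

lemma aipwScore_eq_of_potential_outcomes (hZ01 : ∀ ω, Z ω = 0 ∨ Z ω = 1)
    (hY : ∀ ω, Y ω = Z ω * Y1 ω + (1 - Z ω) * Y0 ω) (ω : Ω) :
    aipwScore pi mu L Z Y ω = Z ω / pi (L ω) * (Y1 ω - mu (1, L ω))
      - (1 - Z ω) / (1 - pi (L ω)) * (Y0 ω - mu (0, L ω)) + (mu (1, L ω) - mu (0, L ω)) := by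
  rcases hZ01 ω with h | h <;> simp only [aipwScore, hY ω, h] <;> ring

theorem integrable_aipwScore_and_integral_eq {m' mΩ : MeasurableSpace Ω} [StandardBorelSpace Ω]
    [MeasurableSpace S] {μ : Measure Ω} [IsFiniteMeasure μ]
    (hm' : m' ≤ mΩ) (hL : Measurable[m'] L) (hZ : Measurable Z) (hY0 : Measurable Y0)
    (hY1 : Measurable Y1) (hZ01 : ∀ ω, Z ω = 0 ∨ Z ω = 1)
    (hY : ∀ ω, Y ω = Z ω * Y1 ω + (1 - Z ω) * Y0 ω) (hpiM : Measurable pi)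
    (hmuM : Measurable mu) (hpi : (fun ω => pi (L ω)) =ᵐ[μ] μ[Z | m'])
    (hZY : CondIndepFun m' hm' Z (fun ω => (Y0 ω, Y1 ω)) μ)
    (hpi01 : ∀ᵐ ω ∂μ, pi (L ω) ≠ 0 ∧ pi (L ω) ≠ 1)
    (hY0i : Integrable Y0 μ) (hY1i : Integrable Y1 μ)
    (hmu0i : Integrable (fun ω => mu (0, L ω)) μ) (hmu1i : Integrable (fun ω => mu (1, L ω)) μ) :
    Integrable (aipwScore pi mu L Z Y) μ
      ∧ ∫ ω, aipwScore pi mu L Z Y ω ∂μ = ∫ ω, (Y1 ω - Y0 ω) ∂μ := by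
  have hW : Measurable fun ω => (Y0 ω, Y1 ω) := hY0.prodMk hY1
  have hZc : Measurable fun ω => 1 - Z ω := measurable_const.sub hZ
  have hZc01 : ∀ ω, 1 - Z ω = 0 ∨ 1 - Z ω = 1 := fun ω => by
    rcases hZ01 ω with h | h <;> simp [h]
  have hZcY : CondIndepFun m' hm' (fun ω => 1 - Z ω) (fun ω => (Y0 ω, Y1 ω)) μ :=
    hZY.comp (measurable_const.sub measurable_id) measurable_id
  have hpic := one_sub_ae_eq_condExp_one_sub hm' (integrable_of_zero_or_one hZ hZ01) hpi
  have hpi0 : ∀ᵐ ω ∂μ, pi (L ω) ≠ 0 := hpi01.mono fun _ h => h.1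
  have hpic0 : ∀ᵐ ω ∂μ, 1 - pi (L ω) ≠ 0 := hpi01.mono fun _ h => sub_ne_zero.2 h.2.symm
  have hg1 : Measurable fun q : S × ℝ × ℝ => q.2.2 - mu (1, q.1) := by fun_prop
  have hg0 : Measurable fun q : S × ℝ × ℝ => q.2.1 - mu (0, q.1) := by fun_prop
  have htreated_i : Integrable (fun ω => Z ω / pi (L ω) * (Y1 ω - mu (1, L ω))) μ :=
    integrable_div_mul_of_condIndepFun hm' hL hZ hW hZ01 hZY hpiM hpi hpi0 hg1 (hY1i.sub hmu1i)
  have hcontrol_i :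
      Integrable (fun ω => (1 - Z ω) / (1 - pi (L ω)) * (Y0 ω - mu (0, L ω))) μ :=
    integrable_div_mul_of_condIndepFun hm' hL hZc hW hZc01 hZcY (measurable_const.sub hpiM)
      hpic hpic0 hg0 (hY0i.sub hmu0i)
  have htreated : ∫ ω, Z ω / pi (L ω) * (Y1 ω - mu (1, L ω)) ∂μ
      = ∫ ω, (Y1 ω - mu (1, L ω)) ∂μ :=
    integral_div_mul_eq_of_condIndepFun hm' hL hZ hW hZ01 hZY hpiM hpi hpi0 hg1
  have hcontrol : ∫ ω, (1 - Z ω) / (1 - pi (L ω)) * (Y0 ω - mu (0, L ω)) ∂μ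
      = ∫ ω, (Y0 ω - mu (0, L ω)) ∂μ :=
    integral_div_mul_eq_of_condIndepFun hm' hL hZc hW hZc01 hZcY (measurable_const.sub hpiM)
      hpic hpic0 hg0
  have hweighted_i : Integrable (fun ω => Z ω / pi (L ω) * (Y1 ω - mu (1, L ω))
      - (1 - Z ω) / (1 - pi (L ω)) * (Y0 ω - mu (0, L ω))) μ := htreated_i.sub hcontrol_i
  have hmu_i : Integrable (fun ω => mu (1, L ω) - mu (0, L ω)) μ := hmu1i.sub hmu0i
  rw [show aipwScore pi mu L Z Y = _ from funext (aipwScore_eq_of_potential_outcomes hZ01 hY)]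
  refine ⟨hweighted_i.add hmu_i, ?_⟩
  rw [integral_add hweighted_i hmu_i, integral_sub htreated_i hcontrol_i, htreated, hcontrol,
    integral_sub hY1i hmu1i, integral_sub hY0i hmu0i, integral_sub hmu1i hmu0i,
    integral_sub hY1i hY0i]
  ring

end

theorem triply_robust_M1_general
    {Ω 𝒳 𝒱 : Type*}
    [MeasurableSpace Ω] [StandardBorelSpace Ω]
    [MeasurableSpace 𝒳]
    [MeasurableSpace 𝒱]
    (μ : Measure Ω) [IsProbabilityMeasure μ]
    (X : Ω → 𝒳) (V : Ω → 𝒱) (Z R Y0 Y1 : Ω → ℝ)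
    (hX : Measurable X) (hV : Measurable V) (hZ : Measurable Z)
    (hR : Measurable R) (hY0 : Measurable Y0) (hY1 : Measurable Y1)
    (hZ01 : ∀ ω, Z ω = 0 ∨ Z ω = 1) (hR01 : ∀ ω, R ω = 0 ∨ R ω = 1)
    (hYbd : ∃ C, ∀ ω, |Y0 ω| ≤ C ∧ |Y1 ω| ≤ C)
    (Y : Ω → ℝ) (hYdef : ∀ ω, Y ω = Z ω * Y1 ω + (1 - Z ω) * Y0 ω)
    (pi : 𝒳 × 𝒱 → ℝ) (rho : 𝒳 → ℝ)
    (hpiM : Measurable pi) (hrhoM : Measurable rho)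
    (hpi : (fun ω => pi (X ω, V ω)) =ᵐ[μ]
      μ[Z | MeasurableSpace.comap (fun ω => (X ω, V ω)) inferInstance])
    (hrho : (fun ω => rho (X ω)) =ᵐ[μ]
      μ[R | MeasurableSpace.comap X inferInstance])
    (hA1 : CondIndepFun (MeasurableSpace.comap X inferInstance)
      (measurable_iff_comap_le.mp hX) R (fun ω => (Y ω, Z ω, V ω)) μ)
    (hA2 : CondIndepFun (MeasurableSpace.comap (fun ω => (X ω, V ω)) inferInstance)
      (measurable_iff_comap_le.mp (hX.prodMk hV)) Z (fun ω => (Y0 ω, Y1 ω)) μ)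
    (hA3 : ∀ᵐ ω ∂μ, 0 < pi (X ω, V ω) ∧ pi (X ω, V ω) < 1)
    (hA4 : ∀ᵐ ω ∂μ, 0 < rho (X ω))
    (mustar : ℝ × 𝒳 × 𝒱 → ℝ) (hmustarM : Measurable mustar)
    (hmustarBd : ∃ C, ∀ p, |mustar p| ≤ C)
    (hstar : 𝒳 → ℝ) (hhstarM : Measurable hstar) (hhstarBd : ∃ C, ∀ x, |hstar x| ≤ C) :
    ∫ ω, (R ω / rho (X ω)) *
          ((Z ω / pi (X ω, V ω)) * (Y ω - mustar (1, X ω, V ω))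
            - ((1 - Z ω) / (1 - pi (X ω, V ω))) * (Y ω - mustar (0, X ω, V ω))
            + (mustar (1, X ω, V ω) - mustar (0, X ω, V ω)) - hstar (X ω))
        + hstar (X ω) ∂μ
      = ∫ ω, (Y1 ω - Y0 ω) ∂μ := by
  obtain ⟨CY, hCY⟩ := hYbd
  obtain ⟨Cm, hCm⟩ := hmustarBd
  obtain ⟨Ch, hCh⟩ := hhstarBd
  have hL : Measurable fun ω => (X ω, V ω) := hX.prodMk hV
  have hY : Measurable Y := by
    rw [show Y = _ from funext hYdef]
    fun_prop
  have hscore := integrable_aipwScore_and_integral_eq (measurable_iff_comap_le.mp hL)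
    (comap_measurable _) hZ hY0 hY1 hZ01 hYdef hpiM hmustarM hpi hA2
    (hA3.mono fun _ h => ⟨h.1.ne', h.2.ne⟩)
    (.of_bound hY0.aestronglyMeasurable CY (.of_forall fun ω => (hCY ω).1))
    (.of_bound hY1.aestronglyMeasurable CY (.of_forall fun ω => (hCY ω).2))
    (.of_bound (hmustarM.comp (by fun_prop)).aestronglyMeasurable Cm (.of_forall fun _ => hCm _))
    (.of_bound (hmustarM.comp (by fun_prop)).aestronglyMeasurable Cm (.of_forall fun _ => hCm _))
  have hG : Measurable fun q : 𝒳 × ℝ × ℝ × 𝒱 =>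
      aipwScore pi mustar (fun q => (q.1, q.2.2.2)) (fun q => q.2.2.1) (fun q => q.2.1) q :=
    measurable_aipwScore hpiM hmustarM (by fun_prop) (by fun_prop) (by fun_prop)
  exact (integral_div_mul_sub_add_eq_of_condIndepFun _ (comap_measurable X) hR
    (hY.prodMk (hZ.prodMk hV)) hR01 hA1 hrhoM hrho (hA4.mono fun _ h => h.ne') hG hscore.1
    hhstarM (.of_bound (hhstarM.comp hX).aestronglyMeasurable Ch (.of_forall fun _ => hCh _))
    ).trans hscore.2

theorem triply_robust_M1
    {Ω 𝒳 𝒱 : Type*}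
    [MeasurableSpace Ω] [StandardBorelSpace Ω] [Nonempty Ω]
    [MeasurableSpace 𝒳] [StandardBorelSpace 𝒳]
    [MeasurableSpace 𝒱] [StandardBorelSpace 𝒱]
    (μ : Measure Ω) [IsProbabilityMeasure μ]
    (X : Ω → 𝒳) (V : Ω → 𝒱) (Z R Y0 Y1 : Ω → ℝ)
    (hX : Measurable X) (hV : Measurable V) (hZ : Measurable Z)
    (hR : Measurable R) (hY0 : Measurable Y0) (hY1 : Measurable Y1)
    (hZ01 : ∀ ω, Z ω = 0 ∨ Z ω = 1) (hR01 : ∀ ω, R ω = 0 ∨ R ω = 1)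
    (hYbd : ∃ C, ∀ ω, |Y0 ω| ≤ C ∧ |Y1 ω| ≤ C)
    (Y : Ω → ℝ) (hYdef : ∀ ω, Y ω = Z ω * Y1 ω + (1 - Z ω) * Y0 ω)
    (pi : 𝒳 × 𝒱 → ℝ) (rho : 𝒳 → ℝ)
    (hpiM : Measurable pi) (hrhoM : Measurable rho)
    (hpi : (fun ω => pi (X ω, V ω)) =ᵐ[μ]
      μ[Z | MeasurableSpace.comap (fun ω => (X ω, V ω)) inferInstance])
    (hrho : (fun ω => rho (X ω)) =ᵐ[μ]
      μ[R | MeasurableSpace.comap X inferInstance])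
    (hA1 : CondIndepFun (MeasurableSpace.comap X inferInstance)
      (measurable_iff_comap_le.mp hX) R (fun ω => (Y ω, Z ω, V ω)) μ)
    (hA2 : CondIndepFun (MeasurableSpace.comap (fun ω => (X ω, V ω)) inferInstance)
      (measurable_iff_comap_le.mp (hX.prodMk hV)) Z (fun ω => (Y0 ω, Y1 ω)) μ)
    (hA3 : ∀ᵐ ω ∂μ, 0 < pi (X ω, V ω) ∧ pi (X ω, V ω) < 1)
    (hA4 : ∀ᵐ ω ∂μ, 0 < rho (X ω))
    (mustar : ℝ × 𝒳 × 𝒱 → ℝ) (hmustarM : Measurable mustar)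
    (hmustarBd : ∃ C, ∀ p, |mustar p| ≤ C)
    (hstar : 𝒳 → ℝ) (hhstarM : Measurable hstar) (hhstarBd : ∃ C, ∀ x, |hstar x| ≤ C) :
    ∫ ω, (R ω / rho (X ω)) *
          ((Z ω / pi (X ω, V ω)) * (Y ω - mustar (1, X ω, V ω))
            - ((1 - Z ω) / (1 - pi (X ω, V ω))) * (Y ω - mustar (0, X ω, V ω))
            + (mustar (1, X ω, V ω) - mustar (0, X ω, V ω)) - hstar (X ω))
        + hstar (X ω) ∂μ
      = ∫ ω, (Y1 ω - Y0 ω) ∂μ :=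
  triply_robust_M1_general μ X V Z R Y0 Y1 hX hV hZ hR hY0 hY1 hZ01 hR01 hYbd Y hYdef pi rho hpiM
    hrhoM hpi hrho hA1 hA2 hA3 hA4 mustar hmustarM hmustarBd hstar hhstarM hhstarBd
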